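/- (The amplitude a(x,y,ξ₁) belongs to the symbol class S^{m-k} for large |ξ₁|, as claimed in the proof of Proposition 4.1 b).) Let m ≥ 0 be a real number, k a natural number, and ρ : ℝ² \ {0} → ℂ smooth and homogeneous of degree 0 such that φ(τ) := ρ(1,τ) is compactly supported and φ^{(l)}(0) = 0 for all 0 ≤ l ≤ k-1. Define a(s, ξ₁) = ∫_0^∞ e^{isξ₂} (ξ₁² + ξ₂²)^{m/2} ρ(ξ₁, ξ₂) dξ₂ for s ∈ ℝ and ξ₁ > 0. Then a is smooth on ℝ × (0,∞), and for all natural numbers j, n and every δ > 0 there exists a constant C such that | ∂_s^j ∂_{ξ₁}^n a(s, ξ₁) | ≤ C ξ₁^{m-k-n} for all ξ₁ ≥ 1 and all s with |s| ≥ δ. -/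

import Mathlib

/-!
Substituting `ξ₂ = ξ₁ τ` and using the homogeneity of `ρ` gives `a(s, ξ₁) = ξ₁^(m+1) F(s ξ₁)`,
where `F(t) = ∫_0^∞ e^{itτ} ψ(τ) dτ` and `ψ(τ) = (1 + τ²)^(m/2) φ(τ)` is smooth, compactly
supported and vanishes to order `k` at `0`. Differentiating under the integral, `F^(p)` is the
transform of `i^p τ^p ψ`, which vanishes to order `k + p`; integrating by parts `k + p + 1` times,
all boundary terms at `0` but the last one vanish, so `|F^(p)(t)| ≤ C |t|^(-(k+p+1))`. Finally
`∂_s^j a = ξ₁^(m+1+j) F^(j)(s ξ₁)`, and by the Leibniz rule each term of `∂_{ξ₁}^n` of it is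
`O(ξ₁^(m-k-n))` uniformly in `|s| ≥ δ`.
-/

open MeasureTheory Real Complex Set Filter Topology
open scoped ContDiff

section IteratedDeriv

variable {𝕜 F : Type*} [NontriviallyNormedField 𝕜] [NormedAddCommGroup F] [NormedSpace 𝕜 F]

def VanishesToOrderAtZero (g : 𝕜 → F) (N : ℕ) : Prop :=
  ∀ l < N, iteratedDeriv l g 0 = 0

theorem vanishesToOrderAtZero_pow (p : ℕ) : VanishesToOrderAtZero (fun x : 𝕜 => x ^ p) p :=
  fun l hl => by rw [iteratedDeriv_fun_pow_zero, if_neg hl.ne, Nat.cast_zero]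

theorem VanishesToOrderAtZero.smul {f : 𝕜 → 𝕜} {g : 𝕜 → F} {M N : ℕ}
    (hf : VanishesToOrderAtZero f M) (hg : VanishesToOrderAtZero g N)
    (hfd : ContDiffAt 𝕜 (M + N) f 0) (hgd : ContDiffAt 𝕜 (M + N) g 0) :
    VanishesToOrderAtZero (fun x => f x • g x) (M + N) := by
  intro l hl
  have hle : ((l : ℕ) : WithTop ℕ∞) ≤ ((M + N : ℕ) : WithTop ℕ∞) := by exact_mod_cast hl.le
  have leibniz := iteratedDerivWithin_smul (mem_univ 0) uniqueDiffOn_univ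
    ((hfd.of_le hle).contDiffWithinAt) ((hgd.of_le hle).contDiffWithinAt)
  simp only [iteratedDerivWithin_univ] at leibniz
  refine leibniz.trans (Finset.sum_eq_zero fun i hi => ?_)
  rcases lt_or_ge i M with hiM | hiM
  · simp [hf i hiM]
  · have hil := Finset.mem_range.mp hi
    simp [hg (l - i) (by omega)]

theorem HasCompactSupport.iteratedDeriv {g : 𝕜 → F} (hg : HasCompactSupport g) (n : ℕ) :
    HasCompactSupport (iteratedDeriv n g) := by
  induction n with
  | zero => simpa using hg
  | succ n ih => rw [iteratedDeriv_succ]; exact ih.deriv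

theorem ContDiff.iteratedDeriv_of_infty {g : 𝕜 → F} (hg : ContDiff 𝕜 ∞ g) (n : ℕ) :
    ContDiff 𝕜 ∞ (iteratedDeriv n g) := by
  rw [iteratedDeriv_eq_iterate]
  exact hg.iterate_deriv n

end IteratedDeriv

noncomputable def fourierIoi (g : ℝ → ℂ) (t : ℝ) : ℂ :=
  ∫ x in Ioi (0 : ℝ), Complex.exp (I * t * x) * g x

section FourierIoi

variable {g : ℝ → ℂ}

theorem norm_cexp_I_mul_mul (t x : ℝ) : ‖Complex.exp (I * t * x)‖ = 1 := by
  rw [show I * t * x = ((t * x : ℝ) : ℂ) * I by push_cast; ring, norm_exp_ofReal_mul_I]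

theorem integrable_cexp_mul (hg : Continuous g) (hcs : HasCompactSupport g) (t : ℝ) :
    Integrable (fun x : ℝ => Complex.exp (I * t * x) * g x) :=
  (Continuous.integrable_of_hasCompactSupport (by fun_prop) hcs.mul_left)

theorem norm_fourierIoi_le (t : ℝ) : ‖fourierIoi g t‖ ≤ ∫ x in Ioi (0 : ℝ), ‖g x‖ :=
  (norm_integral_le_integral_norm _).trans_eq <| by
    simp only [norm_mul, norm_cexp_I_mul_mul, one_mul]

theorem hasDerivAt_fourierIoi (hg : Continuous g) (hcs : HasCompactSupport g) (t : ℝ) :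
    HasDerivAt (fourierIoi g) (I * fourierIoi (fun x => x • g x) t) t := by
  have hxg : Continuous fun x : ℝ => x • g x := continuous_id.smul hg
  have hxg_cs : HasCompactSupport fun x : ℝ => x • g x := hcs.smul_left (f := fun x : ℝ => x)
  have hasDerivAt_integrand : ∀ x u : ℝ, HasDerivAt (fun u : ℝ => Complex.exp (I * u * x) * g x)
      (I * (Complex.exp (I * u * x) * (x • g x))) u := by
    intro x u
    have hlin : HasDerivAt (fun u : ℝ => I * u * x) (I * x) u := by
      simpa using ((hasDerivAt_id (u : ℝ)).ofReal_comp.const_mul I).mul_const (x : ℂ)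
    refine (hlin.cexp.mul_const (g x)).congr_deriv ?_
    simp only [Complex.real_smul]; ring
  have key := hasDerivAt_integral_of_dominated_loc_of_deriv_le (μ := volume.restrict (Ioi 0))
    (F := fun (u x : ℝ) => Complex.exp (I * u * x) * g x)
    (F' := fun (u x : ℝ) => I * (Complex.exp (I * u * x) * (x • g x)))
    (bound := fun x => ‖x • g x‖) (x₀ := t) (Metric.ball_mem_nhds t one_pos) ?_ ?_ ?_ ?_ ?_ ?_
  · rw [fourierIoi, ← integral_const_mul]
    exact key.2
  · exact Eventually.of_forall fun u => (integrable_cexp_mul hg hcs u).aestronglyMeasurable.restrict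
  · exact (integrable_cexp_mul hg hcs t).restrict
  · exact (Continuous.aestronglyMeasurable (by fun_prop)).restrict
  · exact Eventually.of_forall fun x u _ => by
      simp only [norm_mul, norm_I, norm_cexp_I_mul_mul, one_mul, le_refl]
  · exact (hxg.norm.integrable_of_hasCompactSupport hxg_cs.norm).restrict
  · exact Eventually.of_forall fun x u _ => hasDerivAt_integrand x u

theorem iteratedDeriv_fourierIoi (hg : Continuous g) (hcs : HasCompactSupport g) (p : ℕ) :
    iteratedDeriv p (fourierIoi g) = fun t => I ^ p * fourierIoi (fun x => x ^ p • g x) t := by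
  induction p with
  | zero => simp
  | succ p ih =>
    ext t
    have hmoment := hasDerivAt_fourierIoi (g := fun x => x ^ p • g x)
      ((continuous_pow p).smul hg) (hcs.smul_left (f := fun x : ℝ => x ^ p)) t
    rw [iteratedDeriv_succ, ih, deriv_const_mul _ hmoment.differentiableAt, hmoment.deriv]
    simp only [smul_smul, ← pow_succ', pow_succ, mul_assoc]

theorem contDiff_fourierIoi (hg : Continuous g) (hcs : HasCompactSupport g) :
    ContDiff ℝ ∞ (fourierIoi g) :=
  contDiff_of_differentiable_iteratedDeriv fun p _ => by
    rw [iteratedDeriv_fourierIoi hg hcs p]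
    intro t
    have hmoment := hasDerivAt_fourierIoi (g := fun x => x ^ p • g x)
      ((continuous_pow p).smul hg) (hcs.smul_left (f := fun x : ℝ => x ^ p)) t
    exact hmoment.differentiableAt.const_mul _

theorem fourierIoi_deriv (hg : ContDiff ℝ 1 g) (hcs : HasCompactSupport g) (t : ℝ) :
    fourierIoi (deriv g) t = -g 0 - I * t * fourierIoi g t := by
  have hgd : Differentiable ℝ g := hg.differentiable one_ne_zero
  have hg' : Continuous (deriv g) := hg.continuous_deriv le_rfl
  have hderiv : ∀ x : ℝ, HasDerivAt (fun x : ℝ => Complex.exp (I * t * x) * g x)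
      (I * t * (Complex.exp (I * t * x) * g x) + Complex.exp (I * t * x) * deriv g x) x := by
    intro x
    have hlin : HasDerivAt (fun x : ℝ => I * t * x) (I * t) x := by
      simpa using (hasDerivAt_id (x : ℝ)).ofReal_comp.const_mul (I * t)
    exact (hlin.cexp.mul (hgd x).hasDerivAt).congr_deriv (by ring)
  have hint : Integrable (fun x : ℝ => I * t * (Complex.exp (I * t * x) * g x)) :=
    (integrable_cexp_mul hg.continuous hcs t).const_mul (I * t)
  have hint' := integrable_cexp_mul hg' hcs.deriv t
  have ftc := integral_Ioi_of_hasDerivAt_of_tendsto (a := 0)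
    (Continuous.continuousWithinAt (by fun_prop)) (fun x _ => hderiv x)
    (hint.add hint').integrableOn
    (hcs.mul_left.is_zero_at_infty.mono_left atTop_le_cocompact)
  rw [integral_add hint.integrableOn hint'.integrableOn, integral_const_mul] at ftc
  simp only [ofReal_zero, mul_zero, Complex.exp_zero, one_mul, zero_sub] at ftc
  rw [fourierIoi, fourierIoi, ← ftc]
  ring

theorem I_mul_pow_mul_fourierIoi (hg : ContDiff ℝ ∞ g) (hcs : HasCompactSupport g) {N : ℕ}
    (hvan : VanishesToOrderAtZero g N) (t : ℝ) :
    (I * t) ^ N * fourierIoi g t = (-1) ^ N * fourierIoi (iteratedDeriv N g) t := by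
  induction N with
  | zero => simp
  | succ N ih =>
    rw [pow_succ', mul_assoc, ih (fun l hl => hvan l (hl.trans N.lt_succ_self)), iteratedDeriv_succ,
      fourierIoi_deriv ((hg.iteratedDeriv_of_infty N).of_le (by exact_mod_cast le_top))
        (hcs.iteratedDeriv N), hvan N N.lt_succ_self]
    ring

theorem norm_fourierIoi_le_of_vanishesToOrderAtZero (hg : ContDiff ℝ ∞ g)
    (hcs : HasCompactSupport g) {N : ℕ} (hvan : VanishesToOrderAtZero g N) {t : ℝ} (ht : t ≠ 0) :
    ‖fourierIoi g t‖ ≤ (‖iteratedDeriv N g 0‖ + ∫ x in Ioi (0 : ℝ), ‖iteratedDeriv (N + 1) g x‖)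
      * |t| ^ (-(N + 1 : ℝ)) := by
  have hparts : (I * t) ^ (N + 1) * fourierIoi g t
      = (-1) ^ N * (-iteratedDeriv N g 0 - fourierIoi (iteratedDeriv (N + 1) g) t) := by
    rw [pow_succ', mul_assoc, I_mul_pow_mul_fourierIoi hg hcs hvan, iteratedDeriv_succ,
      fourierIoi_deriv ((hg.iteratedDeriv_of_infty N).of_le (by exact_mod_cast le_top))
        (hcs.iteratedDeriv N)]
    ring
  have hbound : |t| ^ (N + 1) * ‖fourierIoi g t‖
      ≤ ‖iteratedDeriv N g 0‖ + ∫ x in Ioi (0 : ℝ), ‖iteratedDeriv (N + 1) g x‖ := by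
    have := congrArg norm hparts
    simp only [norm_mul, norm_pow, norm_neg, norm_one, one_pow, one_mul, norm_I, norm_real,
      Real.norm_eq_abs] at this
    rw [this]
    exact (norm_sub_le _ _).trans (by rw [norm_neg]; gcongr; exact norm_fourierIoi_le t)
  have ht' : 0 < |t| := abs_pos.mpr ht
  rw [rpow_neg ht'.le, ← div_eq_mul_inv, le_div_iff₀ (by positivity),
    show (N + 1 : ℝ) = ((N + 1 : ℕ) : ℝ) by push_cast; ring, rpow_natCast, mul_comm]
  exact hbound

theorem exists_norm_iteratedDeriv_fourierIoi_le (hg : ContDiff ℝ ∞ g) (hcs : HasCompactSupport g)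
    {N : ℕ} (hvan : VanishesToOrderAtZero g N) (p : ℕ) :
    ∃ C, 0 ≤ C ∧ ∀ t ≠ 0, ‖iteratedDeriv p (fourierIoi g) t‖ ≤ C * |t| ^ (-(N + 1 : ℝ) - p) := by
  set h : ℝ → ℂ := fun x => x ^ p • g x
  have hh : ContDiff ℝ ∞ h := (contDiff_id.pow p).smul hg
  have hvan_h : VanishesToOrderAtZero h (p + N) :=
    (vanishesToOrderAtZero_pow p).smul hvan (contDiff_id.pow p).contDiffAt
      (hg.of_le (by exact_mod_cast le_top)).contDiffAt
  refine ⟨‖iteratedDeriv (p + N) h 0‖ + ∫ x in Ioi (0 : ℝ), ‖iteratedDeriv (p + N + 1) h x‖,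
    add_nonneg (norm_nonneg _) (integral_nonneg fun _ => norm_nonneg _), fun t ht => ?_⟩
  rw [iteratedDeriv_fourierIoi hg.continuous hcs, norm_mul, norm_pow, norm_I, one_pow, one_mul]
  convert norm_fourierIoi_le_of_vanishesToOrderAtZero hh (hcs.smul_left (f := fun x : ℝ => x ^ p))
    hvan_h ht using 3
  push_cast; ring

end FourierIoi

section SymbolEstimates

variable {E : Type*} [NormedAddCommGroup E] [NormedSpace ℝ E]

theorem norm_iteratedDeriv_rpow_smul_le {B : ℝ → E} {u : ℝ} (hu : 0 < u) (α β : ℝ) {n : ℕ}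
    (hB : ContDiffAt ℝ n B u) {C : ℕ → ℝ}
    (hC : ∀ i ≤ n, ‖iteratedDeriv i B u‖ ≤ C i * u ^ (β - i)) :
    ‖iteratedDeriv n (fun v => v ^ α • B v) u‖
      ≤ (∑ i ∈ Finset.range (n + 1), n.choose i * |(descPochhammer ℝ i).eval α| * C (n - i))
        * u ^ (α + β - n) := by
  have leibniz := iteratedDerivWithin_smul (mem_univ u) uniqueDiffOn_univ
    (Real.contDiffAt_rpow_const_of_ne (p := α) hu.ne').contDiffWithinAt hB.contDiffWithinAt
  simp only [iteratedDerivWithin_univ] at leibniz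
  rw [show (fun v => v ^ α • B v) = (fun v : ℝ => v ^ α) • B from rfl, leibniz, Finset.sum_mul]
  refine (norm_sum_le _ _).trans (Finset.sum_le_sum fun i hi => ?_)
  have hin : i ≤ n := Nat.lt_succ_iff.mp (Finset.mem_range.mp hi)
  have hpow : u ^ (α - i) * u ^ (β - ↑(n - i)) = u ^ (α + β - n) := by
    rw [← rpow_add hu, Nat.cast_sub hin]; ring_nf
  rw [iteratedDeriv_eq_iterate, iter_deriv_rpow_const]
  set P := (descPochhammer ℝ i).eval α
  calc ‖n.choose i • (P * u ^ (α - i)) • iteratedDeriv (n - i) B u‖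
      ≤ n.choose i * (|P| * u ^ (α - i) * ‖iteratedDeriv (n - i) B u‖) := by
        refine norm_nsmul_le.trans_eq ?_
        rw [norm_smul, norm_mul, Real.norm_eq_abs, Real.norm_eq_abs,
          abs_of_pos (rpow_pos_of_pos hu _)]
    _ ≤ n.choose i * (|P| * u ^ (α - i) * (C (n - i) * u ^ (β - ↑(n - i)))) := by
        gcongr
        exact hC (n - i) (Nat.sub_le n i)
    _ = n.choose i * |P| * C (n - i) * u ^ (α + β - n) := by
        rw [← hpow]; ring

theorem iteratedDeriv_rpow_smul_comp_mul {F : ℝ → E} (hF : ContDiff ℝ ∞ F) (γ : ℝ) (j : ℕ)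
    {u : ℝ} (hu : 0 < u) (s : ℝ) :
    iteratedDeriv j (fun v => u ^ γ • F (v * u)) s = u ^ (γ + j) • iteratedDeriv j F (s * u) := by
  simp_rw [mul_comm _ u]
  rw [iteratedDeriv_fun_const_smul_field,
    iteratedDeriv_comp_const_smul (hF.of_le (by exact_mod_cast le_top)), smul_smul,
    rpow_add hu, rpow_natCast]

theorem exists_norm_iteratedDeriv_iteratedDeriv_le {F : ℝ → E} (hF : ContDiff ℝ ∞ F) {β : ℝ}
    (hβ : β ≤ 0) (hdecay : ∀ p : ℕ, ∃ C, 0 ≤ C ∧ ∀ t ≠ 0, ‖iteratedDeriv p F t‖ ≤ C * |t| ^ (β - p))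
    {γ : ℝ} {a : ℝ → ℝ → E} (ha : ∀ s u, 0 < u → a s u = u ^ γ • F (s * u)) (j n : ℕ) {δ : ℝ}
    (hδ : 0 < δ) :
    ∃ C, ∀ u, 0 < u → ∀ s, δ ≤ |s| →
      ‖iteratedDeriv n (fun u => iteratedDeriv j (fun v => a v u) s) u‖ ≤ C * u ^ (γ + β - n) := by
  choose C hC0 hC using hdecay
  refine ⟨∑ i ∈ Finset.range (n + 1),
    n.choose i * |(descPochhammer ℝ i).eval (γ + j)| * (C (n - i + j) * δ ^ (β - j)),
    fun u hu s hs => ?_⟩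
  have hs0 : 0 < |s| := hδ.trans_le hs
  have hlocal : (fun u => iteratedDeriv j (fun v => a v u) s)
      =ᶠ[𝓝 u] fun w => w ^ (γ + j) • iteratedDeriv j F (s * w) := by
    filter_upwards [Ioi_mem_nhds hu] with w hw
    rw [show (fun v => a v w) = fun v => w ^ γ • F (v * w) from funext fun v => ha v w hw,
      iteratedDeriv_rpow_smul_comp_mul hF γ j hw s]
  have hFj := hF.iteratedDeriv_of_infty j
  have hbound : ∀ i ≤ n, ‖iteratedDeriv i (fun w => iteratedDeriv j F (s * w)) u‖
      ≤ C (i + j) * δ ^ (β - j) * u ^ (β - j - i) := by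
    intro i _
    have hshift : iteratedDeriv i (iteratedDeriv j F) = iteratedDeriv (i + j) F := by
      simp only [iteratedDeriv_eq_iterate, Function.iterate_add]; rfl
    rw [iteratedDeriv_comp_const_smul (hFj.of_le (by exact_mod_cast le_top)), hshift, norm_smul,
      norm_pow, Real.norm_eq_abs]
    have hpow : |s| ^ (i : ℝ) * |s| ^ (β - ↑(i + j)) = |s| ^ (β - j) := by
      rw [← rpow_add hs0]; push_cast; ring_nf
    calc |s| ^ i * ‖iteratedDeriv (i + j) F (s * u)‖
        ≤ |s| ^ i * (C (i + j) * |s * u| ^ (β - ↑(i + j))) := by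
          gcongr
          exact hC _ _ (mul_ne_zero (abs_pos.mp hs0) hu.ne')
      _ = C (i + j) * |s| ^ (β - j) * u ^ (β - j - i) := by
          rw [abs_mul, abs_of_pos hu, mul_rpow hs0.le hu.le, ← rpow_natCast, ← hpow]
          push_cast; ring_nf
      _ ≤ C (i + j) * δ ^ (β - j) * u ^ (β - j - i) := by
          refine mul_le_mul_of_nonneg_right (mul_le_mul_of_nonneg_left ?_ (hC0 _))
            (rpow_nonneg hu.le _)
          exact rpow_le_rpow_of_nonpos hδ hs (by linarith [j.cast_nonneg (α := ℝ)])
  rw [hlocal.iteratedDeriv_eq n]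
  have hB : ContDiff ℝ ∞ fun w => iteratedDeriv j F (s * w) :=
    hFj.comp (contDiff_const.mul contDiff_id)
  convert norm_iteratedDeriv_rpow_smul_le hu (γ + j) (β - j)
    (hB.contDiffAt.of_le (by exact_mod_cast le_top)) hbound using 3
  ring

theorem contDiffOn_rpow_smul_comp_mul {F : ℝ → E} (hF : ContDiff ℝ ∞ F) (γ : ℝ) :
    ContDiffOn ℝ ∞ (fun p : ℝ × ℝ => p.2 ^ γ • F (p.1 * p.2)) {p | 0 < p.2} := fun p hp =>
  (((Real.contDiffAt_rpow_const_of_ne (ne_of_gt hp)).comp p contDiffAt_snd).smul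
    (hF.comp (contDiff_fst.mul contDiff_snd)).contDiffAt).contDiffWithinAt

end SymbolEstimates

theorem integral_Ioi_eq_rpow_smul_fourierIoi {ρ : ℝ × ℝ → ℂ}
    (hhom : ∀ r : ℝ, 0 < r → ∀ ξ : ℝ × ℝ, ξ ≠ 0 → ρ (r • ξ) = ρ ξ) (m s : ℝ) {u : ℝ} (hu : 0 < u) :
    ∫ ξ₂ in Ioi (0 : ℝ), Complex.exp (I * s * ξ₂) * ((u ^ 2 + ξ₂ ^ 2) ^ (m / 2) : ℝ) * ρ (u, ξ₂)
      = u ^ (m + 1) • fourierIoi (fun τ => ((1 + τ ^ 2) ^ (m / 2) : ℝ) • ρ (1, τ)) (s * u) := by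
  have hsubst := integral_comp_mul_left_Ioi'
    (fun ξ₂ : ℝ => Complex.exp (I * s * ξ₂) * ((u ^ 2 + ξ₂ ^ 2) ^ (m / 2) : ℝ) * ρ (u, ξ₂)) 0 hu
  rw [mul_zero] at hsubst
  have hw (x : ℝ) : (u ^ 2 + (u * x) ^ 2) ^ (m / 2) = u ^ m * (1 + x ^ 2) ^ (m / 2) := by
    rw [show u ^ 2 + (u * x) ^ 2 = u ^ 2 * (1 + x ^ 2) by ring,
      mul_rpow (sq_nonneg u) (by positivity), ← rpow_natCast, ← rpow_mul hu.le]
    ring_nf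
  have hρ (x : ℝ) : ρ (u, u * x) = ρ (1, x) := by
    simpa [Prod.smul_mk] using hhom u hu (1, x) (by simp)
  rw [← hsubst, fourierIoi, ← integral_smul, ← integral_smul]
  refine integral_congr_ae (Eventually.of_forall fun x => ?_)
  simp only [hw, hρ, ofReal_mul, Complex.real_smul, rpow_add_one hu.ne']
  ring_nf

theorem stmt_12_general (m : ℝ) (k : ℕ) (ρ : ℝ × ℝ → ℂ)
    (hρ : ContDiffOn ℝ (⊤ : ℕ∞) ρ {ξ : ℝ × ℝ | ξ ≠ 0})
    (hhom : ∀ r : ℝ, 0 < r → ∀ ξ : ℝ × ℝ, ξ ≠ 0 → ρ (r • ξ) = ρ ξ)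
    (φ : ℝ → ℂ) (hφ : φ = fun τ => ρ (1, τ))
    (hcs : HasCompactSupport φ)
    (hvan : ∀ l < k, iteratedDeriv l φ 0 = 0)
    (a : ℝ → ℝ → ℂ)
    (ha : a = fun (s : ℝ) (ξ₁ : ℝ) => ∫ ξ₂ in Set.Ioi (0 : ℝ),
        Complex.exp (Complex.I * s * ξ₂) * ((ξ₁ ^ 2 + ξ₂ ^ 2) ^ (m / 2) : ℝ) * ρ (ξ₁, ξ₂)) :
    ContDiffOn ℝ (⊤ : ℕ∞) (fun p : ℝ × ℝ => a p.1 p.2) {p : ℝ × ℝ | 0 < p.2} ∧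
    ∀ (j n : ℕ), ∀ δ : ℝ, 0 < δ → ∃ C : ℝ, ∀ ξ₁ : ℝ, 1 ≤ ξ₁ → ∀ s : ℝ, δ ≤ |s| →
      ‖iteratedDeriv n (fun u : ℝ => iteratedDeriv j (fun v : ℝ => a v u) s) ξ₁‖
        ≤ C * (ξ₁ ^ (m - k - n) : ℝ) := by
  set w : ℝ → ℝ := fun τ => (1 + τ ^ 2) ^ (m / 2)
  set ψ : ℝ → ℂ := fun τ => w τ • φ τ
  have hφ_smooth : ContDiff ℝ ∞ φ := hφ ▸ contDiff_iff_contDiffAt.mpr fun τ =>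
    (hρ.contDiffAt (isOpen_ne.mem_nhds (by simp))).comp τ (contDiffAt_const.prodMk contDiffAt_id)
  have hw : ContDiff ℝ ∞ w :=
    (contDiff_const.add (contDiff_id.pow 2)).rpow_const_of_ne fun τ => by positivity
  have hψ_smooth : ContDiff ℝ ∞ ψ := hw.smul hφ_smooth
  have hψ_cs : HasCompactSupport ψ := hcs.smul_left (f := w)
  have hψ_vanish : VanishesToOrderAtZero ψ k := by
    simpa only [zero_add] using VanishesToOrderAtZero.smul (M := 0)
      (fun l hl => absurd hl l.not_lt_zero) hvan
      (hw.of_le (by exact_mod_cast le_top)).contDiffAt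
      (hφ_smooth.of_le (by exact_mod_cast le_top)).contDiffAt
  have hF := contDiff_fourierIoi hψ_smooth.continuous hψ_cs
  have ha_eq (s u : ℝ) (hu : 0 < u) : a s u = u ^ (m + 1) • fourierIoi ψ (s * u) := by
    subst ha hφ
    exact integral_Ioi_eq_rpow_smul_fourierIoi hhom m s hu
  refine ⟨(contDiffOn_rpow_smul_comp_mul hF (m + 1)).congr fun p hp => ha_eq p.1 p.2 hp,
    fun j n δ hδ => ?_⟩
  obtain ⟨C, hC⟩ := exists_norm_iteratedDeriv_iteratedDeriv_le hF (neg_nonpos.mpr (by positivity))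
    (exists_norm_iteratedDeriv_fourierIoi_le hψ_smooth hψ_cs hψ_vanish) ha_eq j n hδ
  refine ⟨C, fun ξ₁ hξ₁ s hs => (hC ξ₁ (one_pos.trans_le hξ₁) s hs).trans_eq ?_⟩
  congr 2
  ring

/-- The amplitude `a(s,ξ₁) = ∫_0^∞ e^{isξ₂} (ξ₁²+ξ₂²)^{m/2} ρ(ξ₁,ξ₂) dξ₂` is smooth on
`ℝ × (0,∞)` and belongs to the symbol class `S^{m-k}` for large `ξ₁`: for all `j, n` and
all `δ > 0` there is `C` with `|∂_s^j ∂_{ξ₁}^n a(s,ξ₁)| ≤ C ξ₁^{m-k-n}` for `ξ₁ ≥ 1`,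
`|s| ≥ δ`. -/
theorem stmt_12 (m : ℝ) (hm : 0 ≤ m) (k : ℕ) (ρ : ℝ × ℝ → ℂ)
    (hρ : ContDiffOn ℝ (⊤ : ℕ∞) ρ {ξ : ℝ × ℝ | ξ ≠ 0})
    (hhom : ∀ r : ℝ, 0 < r → ∀ ξ : ℝ × ℝ, ξ ≠ 0 → ρ (r • ξ) = ρ ξ)
    (φ : ℝ → ℂ) (hφ : φ = fun τ => ρ (1, τ))
    (hcs : HasCompactSupport φ)
    (hvan : ∀ l < k, iteratedDeriv l φ 0 = 0)
    (a : ℝ → ℝ → ℂ)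
    (ha : a = fun (s : ℝ) (ξ₁ : ℝ) => ∫ ξ₂ in Set.Ioi (0 : ℝ),
        Complex.exp (Complex.I * s * ξ₂) * ((ξ₁ ^ 2 + ξ₂ ^ 2) ^ (m / 2) : ℝ) * ρ (ξ₁, ξ₂)) :
    ContDiffOn ℝ (⊤ : ℕ∞) (fun p : ℝ × ℝ => a p.1 p.2) {p : ℝ × ℝ | 0 < p.2} ∧
    ∀ (j n : ℕ), ∀ δ : ℝ, 0 < δ → ∃ C : ℝ, ∀ ξ₁ : ℝ, 1 ≤ ξ₁ → ∀ s : ℝ, δ ≤ |s| →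
      ‖iteratedDeriv n (fun u : ℝ => iteratedDeriv j (fun v : ℝ => a v u) s) ξ₁‖
        ≤ C * (ξ₁ ^ (m - k - n) : ℝ) :=
  stmt_12_general m k ρ hρ hhom φ hφ hcs hvan a ha
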